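/- Let x, y ∈ ℝⁿ, w ∈ ℝⁿ with nonnegative entries, 0 < p ≤ 1 and γ > 0. Define φ(x) = Σⱼ wⱼ (xⱼ² + γ)^{p/2} and the diagonal matrix W_y with entries (W_y)ⱼⱼ = wⱼ (yⱼ² + γ)^{(p-2)/2}. Then φ(x) ≤ φ(y) + (p/2) xᵀ W_y x − (p/2) yᵀ W_y y for all x, y, with equality when x = y. -/

import Mathlib

/-!
For `0 ≤ q ≤ 1` the map `u ↦ u ^ q` is concave on `[0, ∞)`, so it lies below its tangent line
at `b = y ^ 2 + γ > 0`. Evaluating at `a = x ^ 2 + γ` gives a bound that is affine in `x ^ 2`,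
i.e. quadratic in `x`; summing it with nonnegative weights yields the majorizer, which is tight at
`x = y`.
-/

open Finset

namespace Real

theorem rpow_le_rpow_add_mul_rpow_sub_one_mul_sub {a b q : ℝ} (ha : 0 ≤ a) (hb : 0 < b)
    (hq₀ : 0 ≤ q) (hq₁ : q ≤ 1) : a ^ q ≤ b ^ q + q * b ^ (q - 1) * (a - b) := by
  have hbq : b ^ q = b ^ (q - 1) * b := by rw [← rpow_add_one hb.ne', sub_add_cancel]
  have hbern : (1 + (a / b - 1)) ^ q ≤ 1 + q * (a / b - 1) :=
    rpow_one_add_le_one_add_mul_self (by linarith [div_nonneg ha hb.le]) hq₀ hq₁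
  rw [add_sub_cancel, div_rpow ha hb.le, div_le_iff₀ (rpow_pos_of_pos hb q)] at hbern
  calc a ^ q ≤ (1 + q * (a / b - 1)) * b ^ q := hbern
    _ = b ^ q + q * b ^ (q - 1) * (a - b) := by
      rw [hbq]
      field_simp

end Real

theorem mul_sq_add_rpow_le {w γ q : ℝ} (hw : 0 ≤ w) (hγ : 0 < γ) (hq₀ : 0 ≤ q) (hq₁ : q ≤ 1)
    (s t : ℝ) :
    w * (s ^ 2 + γ) ^ q ≤
      w * (t ^ 2 + γ) ^ q + q * (w * (t ^ 2 + γ) ^ (q - 1) * s ^ 2)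
        - q * (w * (t ^ 2 + γ) ^ (q - 1) * t ^ 2) := by
  have htangent := Real.rpow_le_rpow_add_mul_rpow_sub_one_mul_sub
    (by positivity : 0 ≤ s ^ 2 + γ) (by positivity : 0 < t ^ 2 + γ) hq₀ hq₁
  calc w * (s ^ 2 + γ) ^ q
      ≤ w * ((t ^ 2 + γ) ^ q + q * (t ^ 2 + γ) ^ (q - 1) * (s ^ 2 + γ - (t ^ 2 + γ))) :=
        mul_le_mul_of_nonneg_left htangent hw
    _ = _ := by ring

theorem sum_mul_sq_add_rpow_le {ι : Type*} [Fintype ι] {w : ι → ℝ} (hw : ∀ j, 0 ≤ w j)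
    {γ q : ℝ} (hγ : 0 < γ) (hq₀ : 0 ≤ q) (hq₁ : q ≤ 1) (x y : ι → ℝ) :
    ∑ j, w j * (x j ^ 2 + γ) ^ q ≤
      ∑ j, w j * (y j ^ 2 + γ) ^ q + q * ∑ j, w j * (y j ^ 2 + γ) ^ (q - 1) * x j ^ 2
        - q * ∑ j, w j * (y j ^ 2 + γ) ^ (q - 1) * y j ^ 2 := by
  rw [mul_sum, mul_sum, ← sum_add_distrib, ← sum_sub_distrib]
  exact sum_le_sum fun j _ => mul_sq_add_rpow_le (hw j) hγ hq₀ hq₁ (x j) (y j)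

theorem stmt_1 (n : ℕ) (x y w : Fin n → ℝ) (hw : ∀ j, 0 ≤ w j)
    (p γ : ℝ) (hp : 0 < p) (hp1 : p ≤ 1) (hγ : 0 < γ) :
    (∑ j, w j * ((x j) ^ 2 + γ) ^ (p / 2)) ≤
        (∑ j, w j * ((y j) ^ 2 + γ) ^ (p / 2))
          + p / 2 * (∑ j, (w j * ((y j) ^ 2 + γ) ^ ((p - 2) / 2)) * (x j) ^ 2)
          - p / 2 * (∑ j, (w j * ((y j) ^ 2 + γ) ^ ((p - 2) / 2)) * (y j) ^ 2) ∧
      (x = y →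
        (∑ j, w j * ((x j) ^ 2 + γ) ^ (p / 2)) =
          (∑ j, w j * ((y j) ^ 2 + γ) ^ (p / 2))
            + p / 2 * (∑ j, (w j * ((y j) ^ 2 + γ) ^ ((p - 2) / 2)) * (x j) ^ 2)
            - p / 2 * (∑ j, (w j * ((y j) ^ 2 + γ) ^ ((p - 2) / 2)) * (y j) ^ 2)) := by
  have hexp : (p - 2) / 2 = p / 2 - 1 := by ring
  refine ⟨?_, fun hxy => by subst hxy; ring⟩
  rw [hexp]
  exact sum_mul_sq_add_rpow_le hw hγ (by linarith) (by linarith) x y
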